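/- In the loop L = ℤ × ℤ with product (p,q)·(p',q') = (p+p', q+q'+C(p,2)·C(p',2)), every triple commutator of left translations by elements of the form (s,0) lies in the centre of the left multiplication group; explicitly, [L_{(s,0)}, [L_{(p,0)}, L_{(r,0)}]](a,b) = (a, b − p·r·s·(p−r)/2) for all integers a,b,p,r,s, a value independent of a. -/

import Mathlib

/-- C(p,2) = p(p-1)/2 for an arbitrary integer p. -/
def c2 (p : ℤ) : ℤ := p * (p - 1) / 2

/-- Left translation L_c by c in the loop L = ℤ × ℤ with product
(p,q)·(p',q') = (p+p', q+q'+C(p,2)·C(p',2)), as a permutation of L. -/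
def Ltrans (c : ℤ × ℤ) : Equiv.Perm (ℤ × ℤ) where
  toFun x := (c.1 + x.1, c.2 + x.2 + c2 c.1 * c2 x.1)
  invFun y := (y.1 - c.1, y.2 - c.2 - c2 c.1 * c2 (y.1 - c.1))
  left_inv x := by
    refine Prod.ext (by dsimp; ring) ?_
    dsimp
    rw [add_sub_cancel_left]
    ring
  right_inv y := by
    refine Prod.ext (by dsimp; ring) ?_
    dsimp
    ring

/-- The commutator F⁻¹ ∘ G⁻¹ ∘ F ∘ G of two permutations. -/
def pcomm (F G : Equiv.Perm (ℤ × ℤ)) : Equiv.Perm (ℤ × ℤ) := F⁻¹ * G⁻¹ * F * G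

/-!
The commutator of the left translations by `c` and `d` fixes the first coordinate and shears
the second, `(x, y) ↦ (x, y + k x)` with `k = d.1 C(c.1,2) - c.1 C(d.1,2)`; for `c = (p,0)`,
`d = (r,0)` this is `k = p r (p - r) / 2`. The commutator of a left translation `L_c` with such a
shear is the vertical shift `(x, y) ↦ (x, y - c.1 k)`, i.e. left translation by `(0, -c.1 k)`.
Since `C(0,2) = 0`, the elements `(0, t)` are central, so their translations commute with every
left translation and hence with the whole left multiplication group.
-/

lemma two_mul_c2 (p : ℤ) : 2 * c2 p = p * (p - 1) :=
  Int.two_mul_ediv_two_of_even (by simpa [mul_comm] using Int.even_mul_pred_self p)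

lemma c2_add (p q : ℤ) : c2 (p + q) = c2 p + c2 q + p * q := by
  apply mul_left_cancel₀ two_ne_zero
  linear_combination two_mul_c2 (p + q) - two_mul_c2 p - two_mul_c2 q

lemma c2_zero : c2 0 = 0 := rfl

lemma mul_c2_sub_mul_c2 (p r : ℤ) : 2 * (r * c2 p - p * c2 r) = p * r * (p - r) := by
  linear_combination r * two_mul_c2 p - p * two_mul_c2 r

lemma Ltrans_apply (c x : ℤ × ℤ) :
    Ltrans c x = (c.1 + x.1, c.2 + x.2 + c2 c.1 * c2 x.1) := rfl

lemma Ltrans_inv_apply (c y : ℤ × ℤ) :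
    (Ltrans c)⁻¹ y = (y.1 - c.1, y.2 - c.2 - c2 c.1 * c2 (y.1 - c.1)) := rfl

lemma Ltrans_zero_fst_apply (t : ℤ) (x : ℤ × ℤ) : Ltrans (0, t) x = (x.1, x.2 + t) := by
  ext <;> simp [Ltrans_apply, c2_zero, add_comm]

def shear (k : ℤ) : Equiv.Perm (ℤ × ℤ) where
  toFun x := (x.1, x.2 + k * x.1)
  invFun x := (x.1, x.2 - k * x.1)
  left_inv x := by simp
  right_inv x := by simp

lemma shear_apply (k : ℤ) (x : ℤ × ℤ) : shear k x = (x.1, x.2 + k * x.1) := rfl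

lemma shear_inv (k : ℤ) : (shear k)⁻¹ = shear (-k) :=
  Equiv.ext fun x => Prod.ext rfl (show x.2 - k * x.1 = x.2 + -k * x.1 by ring)

lemma pcomm_Ltrans_Ltrans (c d : ℤ × ℤ) :
    pcomm (Ltrans c) (Ltrans d) = shear (d.1 * c2 c.1 - c.1 * c2 d.1) := by
  refine Equiv.ext fun x => Prod.ext ?_ ?_ <;>
    simp only [pcomm, Equiv.Perm.mul_apply, Ltrans_apply, Ltrans_inv_apply, shear_apply]
  · ring
  · rw [show c.1 + (d.1 + x.1) - d.1 = c.1 + x.1 by ring, add_sub_cancel_left,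
      c2_add d.1 x.1, c2_add c.1 x.1]
    ring

lemma pcomm_Ltrans_shear (c : ℤ × ℤ) (k : ℤ) :
    pcomm (Ltrans c) (shear k) = Ltrans (0, -(c.1 * k)) := by
  refine Equiv.ext fun x => Prod.ext ?_ ?_ <;>
    simp only [pcomm, shear_inv, Equiv.Perm.mul_apply, Ltrans_apply, Ltrans_inv_apply,
      shear_apply, add_sub_cancel_left, c2_zero]
  <;> ring

lemma commute_Ltrans_zero_fst (t : ℤ) (c : ℤ × ℤ) : Commute (Ltrans (0, t)) (Ltrans c) := by
  refine Equiv.ext fun x => Prod.ext ?_ ?_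
  · simp only [Equiv.Perm.mul_apply, Ltrans_apply, zero_add]
  · simp only [Equiv.Perm.mul_apply, Ltrans_apply, c2_zero, zero_add]
    ring

lemma commute_Ltrans_zero_fst_of_mem_closure (t : ℤ) {G : Equiv.Perm (ℤ × ℤ)}
    (hG : G ∈ Subgroup.closure (Set.range Ltrans)) : Commute (Ltrans (0, t)) G := by
  refine Subgroup.mem_centralizer_singleton_iff.mp ?_ |>.symm
  refine (Subgroup.closure_le _).mpr ?_ hG
  rintro _ ⟨c, rfl⟩
  exact Subgroup.mem_centralizer_singleton_iff.mpr (commute_Ltrans_zero_fst t c).symm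

lemma pcomm_eq_one_of_commute {F G : Equiv.Perm (ℤ × ℤ)} (h : Commute F G) : pcomm F G = 1 := by
  rw [pcomm, mul_assoc, h.eq, ← mul_inv_rev, inv_mul_cancel]

/-- The triple commutator [L_{(s,0)}, [L_{(p,0)}, L_{(r,0)}]] sends (a,b) to
(a, b − p·r·s·(p−r)/2) (independently of a), and it lies in the centre of the
left multiplication group LMlt(L). -/
theorem stmt4 (s p r : ℤ) :
    (∀ a b : ℤ,
      pcomm (Ltrans (s, 0)) (pcomm (Ltrans (p, 0)) (Ltrans (r, 0))) (a, b) =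
        (a, b - p * r * s * (p - r) / 2)) ∧
    (∀ G ∈ Subgroup.closure (Set.range Ltrans),
      pcomm (pcomm (Ltrans (s, 0)) (pcomm (Ltrans (p, 0)) (Ltrans (r, 0)))) G = 1) := by
  have htriple : pcomm (Ltrans (s, 0)) (pcomm (Ltrans (p, 0)) (Ltrans (r, 0)))
      = Ltrans (0, -(s * (r * c2 p - p * c2 r))) := by
    rw [pcomm_Ltrans_Ltrans, pcomm_Ltrans_shear]
  have hhalf : p * r * s * (p - r) / 2 = s * (r * c2 p - p * c2 r) := by
    rw [show p * r * s * (p - r) = 2 * (s * (r * c2 p - p * c2 r)) by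
      linear_combination -s * mul_c2_sub_mul_c2 p r]
    exact Int.mul_ediv_cancel_left _ two_ne_zero
  refine ⟨fun a b => ?_, fun G hG => ?_⟩
  · rw [htriple, Ltrans_zero_fst_apply, hhalf]
    exact Prod.ext rfl (sub_eq_add_neg _ _).symm
  · rw [htriple]
    exact pcomm_eq_one_of_commute (commute_Ltrans_zero_fst_of_mem_closure _ hG)
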